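/- Let B be a finite set of permutations. Av(B) contains only finitely many of the reversed vertical parallel alternations σ_m^r (m ≥ 1) if and only if B contains a permutation that avoids all three of the permutations 321, 2143, and 2413. -/

import Mathlib

/-- A list of naturals is a permutation (in one-line notation) of `1,…,n`
where `n` is its length. -/
def IsPermList (l : List ℕ) : Prop :=
  l.Perm ((List.range l.length).map (· + 1))

/-- `f` is an occurrence of the pattern `β` in `π`: a strictly increasing
choice of indices of `π` whose entries are order isomorphic to `β`. -/
def IsOccurrence (π β : List ℕ) (f : Fin β.length → Fin π.length) : Prop :=
  StrictMono f ∧ ∀ s t : Fin β.length, π.get (f s) < π.get (f t) ↔ β.get s < β.get t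

/-- `π` contains the pattern `β`. -/
def PContains (π β : List ℕ) : Prop :=
  ∃ f : Fin β.length → Fin π.length, IsOccurrence π β f

/-- `π` avoids the pattern `β`. -/
def PAvoids (π β : List ℕ) : Prop :=
  ¬ PContains π β

/-- The class of permutations avoiding every member of `B`. -/
def Av (B : Set (List ℕ)) : Set (List ℕ) :=
  {π | IsPermList π ∧ ∀ β ∈ B, PAvoids π β}

/-- Insert a new maximum entry at (0-indexed) position `i` of `l`. -/
def insertMax (l : List ℕ) (i : ℕ) : List ℕ :=
  l.insertIdx i (l.length + 1)

/-- Position `i` is an active site of `l` relative to `B`. -/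
def ActiveSite (B : Set (List ℕ)) (l : List ℕ) (i : ℕ) : Prop :=
  i ≤ l.length ∧ insertMax l i ∈ Av B

/-- The increasing permutation `1,2,…,n`. -/
def incrPerm (n : ℕ) : List ℕ :=
  (List.range n).map (· + 1)

/-- A permutation (as a list) is a vertical alternation: every entry in an even
(1-indexed) position lies above every entry in an odd position, or vice versa.
(Index `s : Fin l.length` corresponds to 1-indexed position `s + 1`.) -/
def VerticalAlternation (l : List ℕ) : Prop :=
  (∀ s t : Fin l.length, s.val % 2 = 1 → t.val % 2 = 0 → l.get t < l.get s) ∨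
  (∀ s t : Fin l.length, s.val % 2 = 1 → t.val % 2 = 0 → l.get s < l.get t)

/-- The subsequence of entries in positions congruent to `r` (0-indexed, mod 2)
is increasing. -/
def IncOnRes (l : List ℕ) (r : ℕ) : Prop :=
  ∀ s t : Fin l.length, s < t → s.val % 2 = r → t.val % 2 = r → l.get s < l.get t

/-- The subsequence of entries in positions congruent to `r` (0-indexed, mod 2)
is decreasing. -/
def DecOnRes (l : List ℕ) (r : ℕ) : Prop :=
  ∀ s t : Fin l.length, s < t → s.val % 2 = r → t.val % 2 = r → l.get t < l.get s

/-- A vertical parallel alternation: a vertical alternation of even length whose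
odd-position and even-position subsequences are both increasing or both decreasing. -/
def IsVertParallel (l : List ℕ) : Prop :=
  VerticalAlternation l ∧ Even l.length ∧
    ((IncOnRes l 0 ∧ IncOnRes l 1) ∨ (DecOnRes l 0 ∧ DecOnRes l 1))

/-- A vertical wedge alternation: a vertical alternation of even length for which one of
the odd-position and even-position subsequences is increasing and the other decreasing. -/
def IsVertWedge (l : List ℕ) : Prop :=
  VerticalAlternation l ∧ Even l.length ∧
    ((IncOnRes l 0 ∧ DecOnRes l 1) ∨ (DecOnRes l 0 ∧ IncOnRes l 1))

/-- The vertical parallel alternation `σ_m`, with `σ_m(2i−1) = m+1−i` and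
`σ_m(2i) = 2m+1−i` (1-indexed). -/
def sigmaAlt (m : ℕ) : List ℕ :=
  (List.range (2 * m)).map (fun j => if j % 2 = 0 then m - j / 2 else 2 * m - j / 2)

/-- The vertical wedge alternation `τ_m`, with `τ_m(2i−1) = m+i` and
`τ_m(2i) = m+1−i` (1-indexed). -/
def tauAlt (m : ℕ) : List ℕ :=
  (List.range (2 * m)).map (fun j => if j % 2 = 0 then m + j / 2 + 1 else m - j / 2)

/-- Standardization: replace each entry of `l` by its rank among the entries of `l`. -/
def stList (l : List ℕ) : List ℕ :=
  l.map (fun x => (l.filter (fun y => y ≤ x)).length)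

/-! A permutation avoids `321`, `2143` and `2413` exactly when the bottom of each of its descents
lies below the top of each of its descents; for a permutation this says that it is a merge of two
increasing sequences, one lying entirely below the other. The property passes to patterns, and
`σ_m^r = (m+1) 1 (m+2) 2 ⋯ (2m) m` has it, so no `σ_m^r` contains a `β` containing `321`, `2143`
or `2413`. Conversely, a merge of length `k` embeds in every `σ_m^r` with `m ≥ k`, by sending its
lower entries to odd and its upper entries to even positions. -/

def DescentsSeparated (l : List ℕ) : Prop :=
  ∀ p q r s : Fin l.length, p < q → l.get q < l.get p → r < s → l.get s < l.get r →
    l.get s < l.get p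

theorem DescentsSeparated.of_pcontains {π β : List ℕ} (hπ : DescentsSeparated π)
    (h : PContains π β) : DescentsSeparated β := by
  obtain ⟨f, hf, hord⟩ := h
  intro p q r s hpq hqp hrs hsr
  exact (hord s p).mp <|
    hπ _ _ _ _ (hf hpq) ((hord q p).mpr hqp) (hf hrs) ((hord s r).mpr hsr)

theorem not_descentsSeparated_321 : ¬ DescentsSeparated [3,2,1] := by
  unfold DescentsSeparated; decide

theorem not_descentsSeparated_2143 : ¬ DescentsSeparated [2,1,4,3] := by
  unfold DescentsSeparated; decide

theorem not_descentsSeparated_2413 : ¬ DescentsSeparated [2,4,1,3] := by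
  unfold DescentsSeparated; decide

section Occurrences

variable {π : List ℕ} {p₀ p₁ p₂ p₃ : Fin π.length}

theorem pcontains_321 (h₀₁ : p₀ < p₁) (h₁₂ : p₁ < p₂)
    (v₂₁ : π.get p₂ < π.get p₁) (v₁₀ : π.get p₁ < π.get p₀) : PContains π [3,2,1] := by
  refine ⟨![p₀, p₁, p₂], Fin.strictMono_iff_lt_succ.mpr ?_, ?_⟩
  · intro i; fin_cases i <;> assumption
  · simp only [List.get_eq_getElem] at *
    intro s t; fin_cases s <;> fin_cases t <;> simp <;> omega

theorem pcontains_2143 (h₀₁ : p₀ < p₁) (h₁₂ : p₁ < p₂) (h₂₃ : p₂ < p₃)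
    (v₁₀ : π.get p₁ < π.get p₀) (v₀₃ : π.get p₀ < π.get p₃) (v₃₂ : π.get p₃ < π.get p₂) :
    PContains π [2,1,4,3] := by
  refine ⟨![p₀, p₁, p₂, p₃], Fin.strictMono_iff_lt_succ.mpr ?_, ?_⟩
  · intro i; fin_cases i <;> assumption
  · simp only [List.get_eq_getElem] at *
    intro s t; fin_cases s <;> fin_cases t <;> simp <;> omega

theorem pcontains_2413 (h₀₁ : p₀ < p₁) (h₁₂ : p₁ < p₂) (h₂₃ : p₂ < p₃)
    (v₂₀ : π.get p₂ < π.get p₀) (v₀₃ : π.get p₀ < π.get p₃) (v₃₁ : π.get p₃ < π.get p₁) :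
    PContains π [2,4,1,3] := by
  refine ⟨![p₀, p₁, p₂, p₃], Fin.strictMono_iff_lt_succ.mpr ?_, ?_⟩
  · intro i; fin_cases i <;> assumption
  · simp only [List.get_eq_getElem] at *
    intro s t; fin_cases s <;> fin_cases t <;> simp <;> omega

end Occurrences

theorem descentsSeparated_iff_avoids {β : List ℕ} (hβ : β.Nodup) :
    DescentsSeparated β ↔
      PAvoids β [3,2,1] ∧ PAvoids β [2,1,4,3] ∧ PAvoids β [2,4,1,3] := by
  refine ⟨fun h => ⟨fun h321 => not_descentsSeparated_321 (h.of_pcontains h321),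
    fun h2143 => not_descentsSeparated_2143 (h.of_pcontains h2143),
    fun h2413 => not_descentsSeparated_2413 (h.of_pcontains h2413)⟩, ?_⟩
  rintro ⟨h321, h2143, h2413⟩ s a y b hsa has hyb hby
  by_contra! hsb
  obtain hsb | hsb := hsb.eq_or_lt
  · obtain rfl : s = b := (hβ.get_inj_iff).mp hsb
    exact h321 (pcontains_321 hyb hsa has hby)
  rcases lt_trichotomy y s with hys | rfl | hsy
  · exact h321 (pcontains_321 hys hsa has (hsb.trans hby))
  · exact absurd (hsb.trans hby) (lt_irrefl _)
  rcases lt_trichotomy a y with hay | rfl | hya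
  · exact h2143 (pcontains_2143 hsa hay hyb has hsb hby)
  · exact absurd (has.trans (hsb.trans hby)) (lt_irrefl _)
  rcases lt_trichotomy a b with hab | rfl | hba
  · exact h2413 (pcontains_2413 hsy hya hab has hsb hby)
  · exact absurd (has.trans hsb) (lt_irrefl _)
  · exact h321 (pcontains_321 hyb hba (has.trans hsb) hby)

def SplitAt (l : List ℕ) (c : ℕ) : Prop :=
  StrictMonoOn l.get {p | l.get p ≤ c} ∧ StrictMonoOn l.get {p | c < l.get p}

theorem SplitAt.descentsSeparated {l : List ℕ} {c : ℕ} (h : SplitAt l c) :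
    DescentsSeparated l := by
  have top_gt : ∀ {p q}, p < q → l.get q < l.get p → c < l.get p := fun hpq hqp =>
    not_le.mp fun hp => (h.1 hp (hqp.le.trans hp) hpq).asymm hqp
  have bot_le : ∀ {p q}, p < q → l.get q < l.get p → l.get q ≤ c := fun hpq hqp =>
    not_lt.mp fun hq => (h.2 (hq.trans hqp) hq hpq).asymm hqp
  exact fun p q r s hpq hqp hrs hsr => (bot_le hrs hsr).trans_lt (top_gt hpq hqp)

theorem DescentsSeparated.exists_splitAt {l : List ℕ} (hl : l.Nodup)
    (h : DescentsSeparated l) : ∃ c, SplitAt l c := by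
  classical
  let bottoms : Finset (Fin l.length) := {q | ∃ p, p < q ∧ l.get q < l.get p}
  refine ⟨bottoms.sup l.get, fun s hs t ht hst => ?_, fun s hs t ht hst => ?_⟩
  · by_contra! hts
    have hts : l.get t < l.get s := hts.lt_of_ne ((hl.get_inj_iff).not.mpr hst.ne')
    obtain ⟨b, hb, hsup⟩ :=
      bottoms.exists_mem_eq_sup ⟨t, by simp [bottoms]; exact ⟨s, hst, hts⟩⟩ l.get
    simp only [bottoms, Finset.mem_filter, Finset.mem_univ, true_and] at hb
    obtain ⟨y, hyb, hby⟩ := hb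
    exact (h s t y b hst hts hyb hby).not_ge (hsup ▸ hs)
  · by_contra! hts
    have hts : l.get t < l.get s := hts.lt_of_ne ((hl.get_inj_iff).not.mpr hst.ne')
    exact (Finset.le_sup (f := l.get) (by simp [bottoms]; exact ⟨s, hst, hts⟩)).not_gt ht

theorem IsPermList.nodup {l : List ℕ} (h : IsPermList l) : l.Nodup :=
  h.nodup_iff.mpr (List.nodup_range.map (add_left_injective 1))

theorem sigmaAlt_reverse_length (m : ℕ) : (sigmaAlt m).reverse.length = 2 * m := by
  simp [sigmaAlt]

theorem sigmaAlt_reverse_get (m : ℕ) (p : Fin (sigmaAlt m).reverse.length) :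
    (sigmaAlt m).reverse.get p =
      if p.val % 2 = 0 then m + p.val / 2 + 1 else (p.val + 1) / 2 := by
  have hp : (p : ℕ) < 2 * m := p.isLt.trans_eq (sigmaAlt_reverse_length m)
  rw [List.get_eq_getElem, List.getElem_reverse]
  simp only [sigmaAlt, List.getElem_map, List.getElem_range, List.length_map, List.length_range]
  split_ifs <;> omega

theorem isPermList_sigmaAlt_reverse (m : ℕ) : IsPermList (sigmaAlt m).reverse := by
  have hnd : (sigmaAlt m).Nodup := List.nodup_range.map_on fun x hx y hy hxy => by
    simp only [List.mem_range] at hx hy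
    split_ifs at hxy <;> omega
  refine (List.reverse_perm _).trans <| (List.perm_ext_iff_of_nodup hnd
    (List.nodup_range.map (add_left_injective 1))).mpr fun a => ?_
  rw [sigmaAlt_reverse_length]
  simp only [sigmaAlt, List.mem_map, List.mem_range]
  constructor
  · rintro ⟨j, hj, rfl⟩
    exact ⟨(if j % 2 = 0 then m - j / 2 else 2 * m - j / 2) - 1, by split_ifs <;> omega,
      by split_ifs <;> omega⟩
  · rintro ⟨j, hj, rfl⟩
    by_cases hjm : j < m
    · exact ⟨2 * (m - 1 - j), by omega, by simp; omega⟩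
    · exact ⟨2 * (2 * m - 1 - j) + 1, by omega, by simp [Nat.add_mod]; omega⟩

theorem sigmaAlt_reverse_splitAt (m : ℕ) : SplitAt (sigmaAlt m).reverse m := by
  constructor <;>
  · intro p hp q hq hpq
    simp only [Set.mem_ofPred_eq, sigmaAlt_reverse_get] at hp hq ⊢
    have hq_lt : (q : ℕ) < 2 * m := q.isLt.trans_eq (sigmaAlt_reverse_length m)
    rw [Fin.lt_def] at hpq
    split_ifs at * <;> omega

theorem SplitAt.pcontains_sigmaAlt_reverse {β : List ℕ} {c m : ℕ} (h : SplitAt β c)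
    (hm : β.length ≤ m) : PContains (sigmaAlt m).reverse β := by
  let f : Fin β.length → Fin (sigmaAlt m).reverse.length := fun p =>
    ⟨if β.get p ≤ c then 2 * p + 1 else 2 * p, by
      rw [sigmaAlt_reverse_length]; split_ifs <;> omega⟩
  have hf : ∀ p, (sigmaAlt m).reverse.get (f p) =
      if β.get p ≤ c then p.val + 1 else m + p.val + 1 := by
    intro p
    rw [sigmaAlt_reverse_get]
    simp only [f]
    split_ifs <;> omega
  refine ⟨f, fun p q hpq => ?_, fun s t => ?_⟩
  · rw [Fin.lt_def] at hpq ⊢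
    simp only [f]
    split_ifs <;> omega
  · rw [hf, hf]
    have := s.isLt
    have := t.isLt
    by_cases hs : β.get s ≤ c <;> by_cases ht : β.get t ≤ c <;>
      simp only [hs, ht, if_true, if_false]
    · rw [h.1.lt_iff_lt hs ht, Fin.lt_def]; omega
    · omega
    · omega
    · rw [h.2.lt_iff_lt (not_le.mp hs) (not_le.mp ht), Fin.lt_def]; omega

theorem stmt5_general (B : Set (List ℕ)) (hB : ∀ β ∈ B, IsPermList β) :
    {π | (∃ m : ℕ, 1 ≤ m ∧ π = (sigmaAlt m).reverse) ∧ π ∈ Av B}.Finite ↔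
      ∃ β ∈ B, PAvoids β [3,2,1] ∧ PAvoids β [2,1,4,3] ∧ PAvoids β [2,4,1,3] := by
  rw [← exists_congr fun β => and_congr_right fun hβ =>
    descentsSeparated_iff_avoids (hB β hβ).nodup]
  constructor
  · intro hfin
    by_contra! hno
    refine absurd hfin (Set.infinite_of_injective_forall_mem
      (f := fun n => (sigmaAlt (n + 1)).reverse)
      (fun a b hab => by simpa [sigmaAlt] using congrArg List.length hab)
      fun n => ⟨⟨n + 1, by omega, rfl⟩, isPermList_sigmaAlt_reverse _, fun β hβ hσβ => ?_⟩)
    exact hno β hβ ((sigmaAlt_reverse_splitAt _).descentsSeparated.of_pcontains hσβ)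
  · rintro ⟨β, hβ, hβsep⟩
    obtain ⟨c, hc⟩ := hβsep.exists_splitAt (hB β hβ).nodup
    refine ((Set.finite_Iio β.length).image fun m => (sigmaAlt m).reverse).subset ?_
    rintro π ⟨⟨m, -, rfl⟩, -, hπ⟩
    exact ⟨m, not_le.mp fun hm => hπ β hβ (hc.pcontains_sigmaAlt_reverse hm), rfl⟩

/-- `Av(B)` contains only finitely many of the reversed vertical parallel
alternations `σ_m^r` iff `B` contains a permutation avoiding `321`, `2143` and `2413`. -/
theorem stmt5 (B : Set (List ℕ)) (hBfin : B.Finite) (hB : ∀ β ∈ B, IsPermList β) :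
    {π | (∃ m : ℕ, 1 ≤ m ∧ π = (sigmaAlt m).reverse) ∧ π ∈ Av B}.Finite ↔
      ∃ β ∈ B, PAvoids β [3,2,1] ∧ PAvoids β [2,1,4,3] ∧ PAvoids β [2,4,1,3] :=
  stmt5_general B hB
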